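/- The series Σ_{k=0}^∞ (−1/4)^k · ((1/2)_k)^5 / ((1)_k · ((4)_k)^4) · (4k² + 16k + 17) converges and equals 2^19 / (5^5 · π²). -/

import Mathlib

/-- The Pochhammer symbol `(x)_k = x (x+1) ⋯ (x+k-1) = Γ(x+k)/Γ(x)`. -/
noncomputable def poch (x : ℝ) (k : ℕ) : ℝ := ∏ i ∈ Finset.range k, (x + i)

/-!
`F n k` and `G n k` below form a Wilf–Zeilberger pair:
`F (n + 1) k - F n k = G n (k + 1) - G n k` with `G n 0 = 0` and `G n k → 0` as `k → ∞`, so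
`∑ₖ F n k` does not depend on `n`; the series of the theorem is `2¹⁶ / 5⁵ · ∑ₖ F 3 k`.
As `n → ∞`, under the summable bound `|F n k| ≤ 65 (k + 1)² 4⁻ᵏ`, all terms with `k ≥ 1` tend
to `0`, while by Wallis' product `F n 0 = ((1/2)ₙ / n!)⁴ (8n² + 4n + 1) → 8 / π²`.
Dominated convergence gives the constant value.
-/

open Filter Topology

@[simp] lemma poch_zero (x : ℝ) : poch x 0 = 1 := Finset.prod_range_zero _

lemma poch_succ (x : ℝ) (k : ℕ) : poch x (k + 1) = poch x k * (x + k) :=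
  Finset.prod_range_succ _ _

lemma poch_add (x : ℝ) (m n : ℕ) : poch x (m + n) = poch x m * poch (x + m) n := by
  simp only [poch, Finset.prod_range_add, Nat.cast_add, add_assoc]

lemma poch_succ' (x : ℝ) (k : ℕ) : poch x (k + 1) = x * poch (x + 1) k := by
  rw [add_comm k, poch_add]
  simp [poch]

lemma poch_pos {x : ℝ} (hx : 0 < x) (k : ℕ) : 0 < poch x k :=
  Finset.prod_pos fun _ _ => by positivity

lemma poch_nonneg {x : ℝ} (hx : 0 ≤ x) (k : ℕ) : 0 ≤ poch x k :=
  Finset.prod_nonneg fun _ _ => by positivity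

lemma poch_le_poch {x y : ℝ} (hx : 0 ≤ x) (hxy : x ≤ y) (k : ℕ) : poch x k ≤ poch y k :=
  Finset.prod_le_prod (fun _ _ => by positivity) fun _ _ => by linarith

lemma poch_one_mul_poch_one_le (m n : ℕ) : poch 1 m * poch 1 n ≤ poch 1 (m + n) := by
  rw [poch_add]
  gcongr
  · exact poch_nonneg zero_le_one m
  · exact poch_le_poch zero_le_one (by simp) n

lemma succ_mul_poch_one_mul_poch_one_le (m n : ℕ) :
    (m + 1) * poch 1 m * poch 1 (n + 1) ≤ poch 1 (m + (n + 1)) := by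
  rw [poch_add 1 m, poch_succ' (1 + m), poch_succ' 1, one_mul]
  have hm : (0 : ℝ) ≤ m := m.cast_nonneg
  calc (m + 1) * poch 1 m * poch (1 + 1) n = poch 1 m * ((1 + m) * poch (1 + 1) n) := by ring
    _ ≤ poch 1 m * ((1 + m) * poch (1 + m + 1) n) := by
      gcongr
      · exact poch_nonneg zero_le_one m
      · exact poch_le_poch (by norm_num) (by linarith) n

lemma poch_half_sq_mul_le (n : ℕ) : poch (1 / 2) n ^ 2 * (n + 1) ≤ poch 1 n ^ 2 := by
  induction n with
  | zero => simp
  | succ n ih =>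
    rw [poch_succ, poch_succ]
    have hn : (0 : ℝ) ≤ n := n.cast_nonneg
    push_cast
    nlinarith [mul_le_mul_of_nonneg_right ih (sq_nonneg ((n : ℝ) + 1)), sq_nonneg (poch (1 / 2) n)]

lemma prod_wallis_eq (n : ℕ) :
    ∏ i ∈ Finset.range n, ((2 : ℝ) * i + 2) / (2 * i + 1) * ((2 * i + 2) / (2 * i + 3)) =
      poch 1 n ^ 2 / (poch (1 / 2) n ^ 2 * (2 * n + 1)) := by
  refine Finset.prod_range_induction _
    (fun n => poch 1 n ^ 2 / (poch (1 / 2) n ^ 2 * (2 * n + 1))) (by simp) n fun k _ => ?_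
  have := (poch_pos one_pos k).ne'
  have := (poch_pos one_half_pos k).ne'
  rw [poch_succ, poch_succ]
  push_cast
  field_simp
  ring

lemma tendsto_poch_half_sq_mul_div :
    Tendsto (fun n : ℕ => poch (1 / 2) n ^ 2 * (2 * n + 1) / poch 1 n ^ 2) atTop
      (𝓝 (2 / Real.pi)) := by
  simpa only [prod_wallis_eq, inv_div] using
    Real.tendsto_prod_pi_div_two.inv₀ (by positivity)

lemma tsum_eq_tsum_of_sub_eq_telescoping {G : Type*} [AddCommGroup G] [TopologicalSpace G]
    [IsTopologicalAddGroup G] [T2Space G] {f g h : ℕ → G} (hf : Summable f) (hg : Summable g)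
    (hfg : ∀ k, g k - f k = h (k + 1) - h k) (h_zero : h 0 = 0) (h_lim : Tendsto h atTop (𝓝 0)) :
    ∑' k, g k = ∑' k, f k := by
  have hsum : HasSum (fun k => g k - f k) 0 := by
    refine ((hg.sub hf).hasSum_iff_tendsto_nat).mpr ?_
    simpa only [hfg, Finset.sum_range_sub, h_zero, sub_zero] using h_lim
  rw [← sub_eq_zero, ← hg.tsum_sub hf, hsum.tsum_eq]

namespace SeriesB4

noncomputable def kernel (n k : ℕ) : ℝ :=
  (-1 / 4 : ℝ) ^ k * poch (1 / 2) k ^ 5 * poch (1 / 2) n ^ 4 / (poch 1 k * poch 1 (n + k) ^ 4)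

noncomputable def F (n k : ℕ) : ℝ :=
  kernel n k * (8 * (n : ℝ) ^ 2 + 4 * n + 24 * n * k + 20 * (k : ℝ) ^ 2 + 8 * k + 1)

noncomputable def G (n k : ℕ) : ℝ :=
  kernel n k * (8 * (k : ℝ) * (2 * k + 4 * n + 1))

lemma F_succ_sub (n k : ℕ) : F (n + 1) k - F n k = G n (k + 1) - G n k := by
  have h1 := (poch_pos one_pos k).ne'
  have h2 := (poch_pos one_pos (n + k)).ne'
  have h3 : (1 : ℝ) + k ≠ 0 := by positivity
  have h4 : (1 : ℝ) + (n + k) ≠ 0 := by positivity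
  simp only [F, G, kernel, show n + 1 + k = n + k + 1 by omega, ← add_assoc, poch_succ]
  push_cast
  field_simp
  ring

lemma G_zero (n : ℕ) : G n 0 = 0 := by simp [G]

lemma abs_kernel_le (n k : ℕ) :
    |kernel n k| ≤ (1 / 4) ^ k * (poch (1 / 2) n * poch 1 k / poch 1 (n + k)) ^ 4 := by
  have hk := poch_pos one_pos k
  have hnk := poch_pos one_pos (n + k)
  have hhalf := poch_nonneg one_half_pos.le k
  calc |kernel n k|
      = (1 / 4) ^ k *
          (poch (1 / 2) k ^ 5 * poch (1 / 2) n ^ 4 / (poch 1 k * poch 1 (n + k) ^ 4)) := by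
        simp only [kernel, abs_div, abs_mul, abs_pow, abs_of_nonneg hhalf, abs_of_pos hk,
          abs_of_pos hnk, abs_of_nonneg (poch_nonneg one_half_pos.le n)]
        norm_num
        ring
    _ ≤ (1 / 4) ^ k * (poch 1 k ^ 5 * poch (1 / 2) n ^ 4 / (poch 1 k * poch 1 (n + k) ^ 4)) := by
        gcongr
        exact poch_le_poch one_half_pos.le (by norm_num) k
    _ = (1 / 4) ^ k * (poch (1 / 2) n * poch 1 k / poch 1 (n + k)) ^ 4 := by
        field_simp

lemma poch_half_div_poch_one_pow_four_le (n : ℕ) :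
    (poch (1 / 2) n / poch 1 n) ^ 4 ≤ 1 / (n + 1) ^ 2 := by
  have h1 := poch_pos one_pos n
  rw [div_pow, div_le_div_iff₀ (by positivity) (by positivity), one_mul,
    show poch 1 n ^ 4 = (poch 1 n ^ 2) ^ 2 by ring,
    show poch (1 / 2) n ^ 4 * (n + 1) ^ 2 = (poch (1 / 2) n ^ 2 * (n + 1)) ^ 2 by ring]
  gcongr
  exact poch_half_sq_mul_le n

lemma abs_kernel_le_div_sq (n k : ℕ) : |kernel n k| ≤ (1 / 4) ^ k / (n + 1) ^ 2 := by
  have h1 := poch_pos one_pos n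
  have h2 := poch_pos one_pos k
  have h3 := poch_nonneg one_half_pos.le n
  have h4 := poch_pos one_pos (n + k)
  have hratio : poch (1 / 2) n * poch 1 k / poch 1 (n + k) ≤ poch (1 / 2) n / poch 1 n := by
    rw [div_le_div_iff₀ (poch_pos one_pos _) h1, mul_assoc]
    gcongr
    rw [mul_comm]
    exact poch_one_mul_poch_one_le n k
  calc |kernel n k| ≤ (1 / 4) ^ k * (poch (1 / 2) n * poch 1 k / poch 1 (n + k)) ^ 4 :=
        abs_kernel_le n k
    _ ≤ (1 / 4) ^ k * (poch (1 / 2) n / poch 1 n) ^ 4 := by gcongr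
    _ ≤ (1 / 4) ^ k * (1 / (n + 1) ^ 2) := by gcongr; exact poch_half_div_poch_one_pow_four_le n
    _ = (1 / 4) ^ k / (n + 1) ^ 2 := by ring

lemma abs_kernel_succ_le (n k : ℕ) : |kernel n (k + 1)| ≤ (1 / 4) ^ (k + 1) / (n + 1) ^ 6 := by
  have h1 := poch_pos one_pos n
  have h2 := poch_pos one_pos (k + 1)
  have h3 := poch_nonneg one_half_pos.le n
  have h4 := poch_pos one_pos (n + (k + 1))
  have hratio : poch (1 / 2) n * poch 1 (k + 1) / poch 1 (n + (k + 1)) ≤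
      poch (1 / 2) n / poch 1 n / (n + 1) := by
    rw [div_div, div_le_div_iff₀ (poch_pos one_pos _) (by positivity), mul_assoc]
    gcongr
    linarith [succ_mul_poch_one_mul_poch_one_le n k]
  calc |kernel n (k + 1)|
        ≤ (1 / 4) ^ (k + 1) * (poch (1 / 2) n * poch 1 (k + 1) / poch 1 (n + (k + 1))) ^ 4 :=
        abs_kernel_le n (k + 1)
    _ ≤ (1 / 4) ^ (k + 1) * ((poch (1 / 2) n / poch 1 n) ^ 4 / (n + 1) ^ 4) := by
        rw [← div_pow]; gcongr
    _ ≤ (1 / 4) ^ (k + 1) * (1 / (n + 1) ^ 2 / (n + 1) ^ 4) := by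
        gcongr; exact poch_half_div_poch_one_pow_four_le n
    _ = (1 / 4) ^ (k + 1) / (n + 1) ^ 6 := by rw [div_div, ← pow_add]; ring

lemma summable_sq_mul_quarter_pow : Summable fun k : ℕ => ((k : ℝ) + 1) ^ 2 * (1 / 4) ^ k := by
  have h := (summable_nat_add_iff 1).mpr
    (summable_pow_mul_geometric_of_norm_lt_one 2 (r := (1 / 4 : ℝ)) (by norm_num))
  refine (h.mul_left 4).congr fun k => ?_
  push_cast
  ring

lemma abs_F_le_of_abs_kernel_le {n k : ℕ} {B : ℝ} (h : |kernel n k| ≤ B) :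
    |F n k| ≤ B * (65 * (n + 1) ^ 2 * (k + 1) ^ 2) := by
  have hn : (0 : ℝ) ≤ n := n.cast_nonneg
  have hk : (0 : ℝ) ≤ k := k.cast_nonneg
  rw [F, abs_mul]
  refine mul_le_mul h (abs_le.mpr ⟨by nlinarith, ?_⟩) (abs_nonneg _) ((abs_nonneg _).trans h)
  nlinarith [mul_nonneg hn hk, mul_nonneg (mul_nonneg hn hn) hk, mul_nonneg (mul_nonneg hn hk) hk,
    mul_nonneg (mul_nonneg (mul_nonneg hn hn) hk) hk]

lemma abs_G_le_of_abs_kernel_le {n k : ℕ} {B : ℝ} (h : |kernel n k| ≤ B) :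
    |G n k| ≤ B * (56 * (n + 1) ^ 2 * (k + 1) ^ 2) := by
  have hn : (0 : ℝ) ≤ n := n.cast_nonneg
  have hk : (0 : ℝ) ≤ k := k.cast_nonneg
  rw [G, abs_mul]
  refine mul_le_mul h (abs_le.mpr ⟨by nlinarith, ?_⟩) (abs_nonneg _) ((abs_nonneg _).trans h)
  nlinarith [mul_nonneg hn hk, mul_nonneg (mul_nonneg hn hn) hk, mul_nonneg (mul_nonneg hn hk) hk,
    mul_nonneg (mul_nonneg (mul_nonneg hn hn) hk) hk]

lemma abs_F_le (n k : ℕ) : |F n k| ≤ 65 * ((k + 1) ^ 2 * (1 / 4) ^ k) :=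
  (abs_F_le_of_abs_kernel_le (abs_kernel_le_div_sq n k)).trans_eq (by field_simp)

lemma abs_G_le (n k : ℕ) : |G n k| ≤ 56 * ((k + 1) ^ 2 * (1 / 4) ^ k) :=
  (abs_G_le_of_abs_kernel_le (abs_kernel_le_div_sq n k)).trans_eq (by field_simp)

lemma summable_F (n : ℕ) : Summable (F n) :=
  (summable_sq_mul_quarter_pow.mul_left 65).of_norm_bounded (abs_F_le n)

lemma tendsto_G (n : ℕ) : Tendsto (G n) atTop (𝓝 0) :=
  squeeze_zero_norm (abs_G_le n)
    (by simpa using (summable_sq_mul_quarter_pow.mul_left 56).tendsto_atTop_zero)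

lemma tsum_F_eq_tsum_F_zero (n : ℕ) : ∑' k, F n k = ∑' k, F 0 k := by
  induction n with
  | zero => rfl
  | succ n ih =>
    rw [← ih]
    exact tsum_eq_tsum_of_sub_eq_telescoping (summable_F n) (summable_F (n + 1)) (F_succ_sub n)
      (G_zero n) (tendsto_G n)

lemma tendsto_F_succ (k : ℕ) : Tendsto (fun n => F n (k + 1)) atTop (𝓝 0) := by
  set C : ℝ := 65 * ((k + 1 : ℕ) + 1) ^ 2 * (1 / 4) ^ (k + 1) with hC
  have hbound (n : ℕ) : ‖F n (k + 1)‖ ≤ C * (1 / ((n : ℝ) + 1)) ^ 4 :=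
    (abs_F_le_of_abs_kernel_le (abs_kernel_succ_le n k)).trans_eq (by rw [hC]; field_simp)
  refine squeeze_zero_norm hbound ?_
  simpa using (tendsto_one_div_add_atTop_nhds_zero_nat.pow 4).const_mul C

lemma tendsto_quadratic_div_sq :
    Tendsto (fun n : ℕ => (8 * (n : ℝ) ^ 2 + 4 * n + 1) / (2 * n + 1) ^ 2) atTop (𝓝 2) := by
  have hcont : ContinuousAt (fun v : ℝ => (8 - 12 * v + 5 * v ^ 2) / (2 - v) ^ 2) 0 := by
    fun_prop (disch := norm_num)
  have h := hcont.tendsto.comp tendsto_one_div_add_atTop_nhds_zero_nat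
  norm_num at h
  refine h.congr fun n => ?_
  have hn : (n : ℝ) + 1 ≠ 0 := by positivity
  have h2 : 2 - ((n : ℝ) + 1)⁻¹ = (2 * n + 1) / (n + 1) := by field_simp; ring
  simp only [Function.comp_apply, h2]
  field_simp
  ring

lemma F_zero_eq (n : ℕ) :
    F n 0 = (poch (1 / 2) n ^ 2 * (2 * n + 1) / poch 1 n ^ 2) ^ 2 *
      ((8 * (n : ℝ) ^ 2 + 4 * n + 1) / (2 * n + 1) ^ 2) := by
  have := (poch_pos one_pos n).ne'
  have : 2 * (n : ℝ) + 1 ≠ 0 := by positivity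
  simp only [F, kernel, add_zero, poch_zero, Nat.cast_zero]
  field_simp
  ring

lemma tendsto_F_zero : Tendsto (fun n => F n 0) atTop (𝓝 (8 / Real.pi ^ 2)) := by
  have h := (tendsto_poch_half_sq_mul_div.pow 2).mul tendsto_quadratic_div_sq
  rw [show (2 / Real.pi) ^ 2 * 2 = 8 / Real.pi ^ 2 by ring] at h
  simpa only [F_zero_eq] using h

lemma hasSum_F (n : ℕ) : HasSum (F n) (8 / Real.pi ^ 2) := by
  have hlim : Tendsto (fun n => ∑' k, F n k) atTop
      (𝓝 (∑' k, Pi.single (M := fun _ => ℝ) 0 (8 / Real.pi ^ 2) k)) := by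
    refine tendsto_tsum_of_dominated_convergence (summable_sq_mul_quarter_pow.mul_left 65)
      (fun k => ?_) (Eventually.of_forall (abs_F_le ·))
    cases k with
    | zero => simpa using tendsto_F_zero
    | succ k => simpa using tendsto_F_succ k
  rw [tsum_pi_single] at hlim
  simp only [tsum_F_eq_tsum_F_zero] at hlim
  rw [← tendsto_nhds_unique tendsto_const_nhds hlim, ← tsum_F_eq_tsum_F_zero n]
  exact (summable_F n).hasSum

lemma summand_eq (k : ℕ) :
    (-1 / 4 : ℝ) ^ k * poch (1 / 2) k ^ 5 / (poch 1 k * poch 4 k ^ 4) *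
      (4 * (k : ℝ) ^ 2 + 16 * k + 17) = 2 ^ 16 / 5 ^ 5 * F 3 k := by
  have := (poch_pos one_pos k).ne'
  have := (poch_pos (by norm_num : (0 : ℝ) < 4) k).ne'
  have h3 : poch 1 (3 + k) = 6 * poch 4 k := by
    rw [poch_add]
    norm_num [poch, Finset.prod_range_succ]
  have h3' : poch (1 / 2) 3 = 15 / 8 := by norm_num [poch, Finset.prod_range_succ]
  simp only [F, kernel, h3, h3']
  push_cast
  field_simp
  ring

end SeriesB4

theorem series_b4 :
    HasSum
      (fun k : ℕ =>
        (-1/4 : ℝ) ^ k * (poch (1/2) k) ^ 5 / (poch 1 k * (poch 4 k) ^ 4) *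
          (4 * (k : ℝ) ^ 2 + 16 * k + 17))
      (2 ^ 19 / (5 ^ 5 * Real.pi ^ 2)) := by
  have h := (SeriesB4.hasSum_F 3).mul_left (2 ^ 16 / 5 ^ 5)
  rw [show (2 : ℝ) ^ 16 / 5 ^ 5 * (8 / Real.pi ^ 2) = 2 ^ 19 / (5 ^ 5 * Real.pi ^ 2) by ring] at h
  simpa only [SeriesB4.summand_eq] using h
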